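/- arXiv:1310.0219 — 4 statements merged into one kernel-verified Lean document; each statement's English description precedes it below -/
import Mathlib

section
/- Let p ≥ 1 be an integer. If there exist linear endomorphisms ρ₁, …, ρ_p of ℝ^{p+1} satisfying ρᵢ ∘ ρᵢ = −id for all i and ρᵢ ∘ ρⱼ + ρⱼ ∘ ρᵢ = 0 for all i ≠ j, then p = 1 or p = 3 or p = 7. -/
open Module LinearMap

lemma anticomm_cs_dvd (q : ℕ) :
    ∀ (V : Type) [AddCommGroup V] [Module ℂ V] [FiniteDimensional ℂ V]
      (τ : Fin q → (V →ₗ[ℂ] V)),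
      (∀ i, τ i ∘ₗ τ i = -LinearMap.id) →
      (∀ i j, i ≠ j → τ i ∘ₗ τ j + τ j ∘ₗ τ i = 0) →
      2 ^ (q / 2) ∣ Module.finrank ℂ V := by
  induction q using Nat.strong_induction_on with
  | _ q IH =>
  match q with
  | 0 => intro V _ _ _ τ hsq hanti; simp
  | 1 => intro V _ _ _ τ hsq hanti; simp
  | (q + 2) =>
    intro V _ _ _ τ hsq hanti
    have hsq' : ∀ i v, τ i (τ i v) = -v := by
      intro i v
      have := LinearMap.ext_iff.mp (hsq i) v
      simpa using this
    have hanti' : ∀ i j, i ≠ j → ∀ v, τ i (τ j v) = - τ j (τ i v) := by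
      intro i j hij v
      have := LinearMap.ext_iff.mp (hanti i j hij) v
      simp at this
      linear_combination (norm := module) this
    set P := LinearMap.ker (τ 0 - Complex.I • LinearMap.id) with hP
    set N := LinearMap.ker (τ 0 + Complex.I • LinearMap.id) with hN
    have memP : ∀ v, v ∈ P ↔ τ 0 v = Complex.I • v := by
      intro v
      rw [hP, LinearMap.mem_ker]
      simp [sub_eq_zero]
    have memN : ∀ v, v ∈ N ↔ τ 0 v = -(Complex.I • v) := by
      intro v
      rw [hN, LinearMap.mem_ker]
      simp [add_eq_zero_iff_eq_neg]
    -- inf is ⊥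
    have hinf : P ⊓ N = ⊥ := by
      rw [eq_bot_iff]
      intro v hv
      obtain ⟨h1, h2⟩ := Submodule.mem_inf.mp hv
      rw [memP] at h1
      rw [memN] at h2
      rw [h1] at h2
      have h4 : (Complex.I + Complex.I) • v = 0 := by
        linear_combination (norm := module) h2
      rcases smul_eq_zero.mp h4 with h | h
      · exfalso
        simp [Complex.ext_iff] at h
      · simpa using h
    -- sup is ⊤
    have hsup : P ⊔ N = ⊤ := by
      rw [eq_top_iff]
      intro v _
      apply Submodule.mem_sup.mpr
      refine ⟨(2⁻¹ : ℂ) • (v - Complex.I • τ 0 v), ?_,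
              (2⁻¹ : ℂ) • (v + Complex.I • τ 0 v), ?_, ?_⟩
      · rw [memP]
        rw [map_smul, map_sub, map_smul, hsq' 0 v]
        match_scalars <;> first
          | ring1
          | linear_combination (1/2 : ℂ) * Complex.I_sq
      · rw [memN]
        rw [map_smul, map_add, map_smul, hsq' 0 v]
        match_scalars <;> first
          | ring1
          | linear_combination (1/2 : ℂ) * Complex.I_sq
      · module
    have hrank_sum : finrank ℂ P + finrank ℂ N = finrank ℂ V := by
      have h := Submodule.finrank_sup_add_finrank_inf_eq P N
      rw [hsup, hinf] at h
      simp [finrank_top] at h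
      omega
    -- τ 1 : P ≃ N
    have h01 : (0 : Fin (q+2)) ≠ 1 := by simp [Fin.ext_iff]
    have hgPN : ∀ x ∈ P, τ 1 x ∈ N := by
      intro x hx
      rw [memP] at hx
      rw [memN, hanti' 0 1 h01, hx, map_smul]
    have hgNP' : ∀ x ∈ N, (-(τ 1)) x ∈ P := by
      intro x hx
      rw [memN] at hx
      apply Submodule.neg_mem
      rw [memP, hanti' 0 1 h01, hx]
      simp
    have e : P ≃ₗ[ℂ] N := by
      refine LinearEquiv.ofLinear ((τ 1).restrict hgPN) ((-(τ 1)).restrict hgNP') ?_ ?_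
      · ext x
        simp [LinearMap.restrict_apply, hsq' 1]
      · ext x
        simp [LinearMap.restrict_apply, hsq' 1]
    have hrank_eq : finrank ℂ P = finrank ℂ N := e.finrank_eq
    -- restricted structures on P
    have hne0 : ∀ i : Fin q, (0 : Fin (q+2)) ≠ i.succ.succ :=
      fun i => (Fin.succ_ne_zero _).symm
    have hne1 : ∀ i : Fin q, (1 : Fin (q+2)) ≠ i.succ.succ := by
      intro i h
      simp [Fin.ext_iff] at h
    have hσmem : ∀ (i : Fin q), ∀ x ∈ P, (τ 1 ∘ₗ τ i.succ.succ) x ∈ P := by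
      intro i x hx
      rw [memP] at hx
      rw [memP]
      simp only [LinearMap.comp_apply]
      rw [hanti' 0 1 h01, hanti' 0 i.succ.succ (hne0 i), hx]
      simp [map_smul]
    set σ : Fin q → (P →ₗ[ℂ] P) :=
      fun i => (τ 1 ∘ₗ τ i.succ.succ).restrict (hσmem i) with hσ
    have hσval : ∀ i (x : P), ((σ i x : P) : V) = τ 1 (τ i.succ.succ (x : V)) := by
      intro i x
      simp [hσ, LinearMap.restrict_apply]
    have hss : ∀ i j : Fin q, i ≠ j → i.succ.succ ≠ j.succ.succ := by
      intro i j hij h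
      simp [Fin.ext_iff] at h
      exact hij (Fin.ext h)
    have hσsq : ∀ i, σ i ∘ₗ σ i = -LinearMap.id := by
      intro i
      ext x
      simp only [LinearMap.comp_apply, LinearMap.neg_apply, LinearMap.id_apply, hσval,
        Submodule.coe_neg]
      rw [hanti' i.succ.succ 1 (hne1 i).symm, map_neg,
        hsq' i.succ.succ, map_neg, map_neg, hsq' 1]
      simp
    have hσanti : ∀ i j, i ≠ j → σ i ∘ₗ σ j + σ j ∘ₗ σ i = 0 := by
      intro i j hij
      ext x
      simp only [LinearMap.add_apply, LinearMap.comp_apply, LinearMap.zero_apply, hσval,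
        Submodule.coe_add, Submodule.coe_zero]
      rw [hanti' j.succ.succ 1 (hne1 j).symm, hanti' i.succ.succ 1 (hne1 i).symm]
      simp only [map_neg]
      rw [hsq' 1, hsq' 1]
      simp only [neg_neg, map_neg]
      rw [hanti' j.succ.succ i.succ.succ (hss j i (Ne.symm hij))]
      simp
    have hdvd : 2 ^ (q / 2) ∣ finrank ℂ P :=
      IH q (by omega) P σ hσsq hσanti
    have hhalf : (q + 2) / 2 = q / 2 + 1 := by omega
    rw [hhalf, pow_succ]
    have : finrank ℂ V = finrank ℂ P * 2 := by omega
    rw [this]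
    exact mul_dvd_mul hdvd dvd_rfl

lemma two_mul_add_two_lt_two_pow (k : ℕ) (hk : 4 ≤ k) : 2 * k + 2 < 2 ^ k := by
  induction k, hk using Nat.le_induction with
  | base => decide
  | succ k hk ih =>
    have : (2:ℕ) ^ (k+1) = 2 ^ k * 2 := pow_succ 2 k
    omega

/-- A system of `p` anticommuting complex structures on `ℝ^{p+1}` (i.e. a
`Cl_p`-module structure on `ℝ^{p+1}`) exists only for `p = 1`, `3` or `7`. -/
theorem clifford_module_dim (p : ℕ) (hp : 1 ≤ p)
    (ρ : Fin p → ((Fin (p + 1) → ℝ) →ₗ[ℝ] (Fin (p + 1) → ℝ)))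
    (hsq : ∀ i, ρ i ∘ₗ ρ i = -LinearMap.id)
    (hanti : ∀ i j, i ≠ j → ρ i ∘ₗ ρ j + ρ j ∘ₗ ρ i = 0) :
    p = 1 ∨ p = 3 ∨ p = 7 := by
  -- transfer to ℂ via matrices
  set ψ : Matrix (Fin (p+1)) (Fin (p+1)) ℝ →+* Matrix (Fin (p+1)) (Fin (p+1)) ℂ :=
    (algebraMap ℝ ℂ).mapMatrix with hψ
  set M : Fin p → Matrix (Fin (p+1)) (Fin (p+1)) ℝ :=
    fun i => LinearMap.toMatrix' (ρ i) with hM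
  have hMsq : ∀ i, M i * M i = -1 := by
    intro i
    rw [hM]
    simp only
    rw [← LinearMap.toMatrix'_comp, hsq i, map_neg, LinearMap.toMatrix'_id]
  have hManti : ∀ i j, i ≠ j → M i * M j + M j * M i = 0 := by
    intro i j hij
    rw [hM]
    simp only
    rw [← LinearMap.toMatrix'_comp, ← LinearMap.toMatrix'_comp, ← map_add, hanti i j hij,
      map_zero]
  set τ : Fin p → ((Fin (p+1) → ℂ) →ₗ[ℂ] (Fin (p+1) → ℂ)) :=
    fun i => Matrix.toLin' (ψ (M i)) with hτ
  have hτsq : ∀ i, τ i ∘ₗ τ i = -LinearMap.id := by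
    intro i
    rw [hτ]
    simp only
    rw [← Matrix.toLin'_mul, ← map_mul, hMsq i, map_neg, map_one, map_neg, Matrix.toLin'_one]
  have hτanti : ∀ i j, i ≠ j → τ i ∘ₗ τ j + τ j ∘ₗ τ i = 0 := by
    intro i j hij
    rw [hτ]
    simp only
    rw [← Matrix.toLin'_mul, ← Matrix.toLin'_mul, ← map_add, ← map_mul ψ, ← map_mul ψ, ← map_add ψ,
      hManti i j hij, map_zero, map_zero]
  have hdvd0 := anticomm_cs_dvd p (Fin (p+1) → ℂ) τ hτsq hτanti
  have hfr : Module.finrank ℂ (Fin (p+1) → ℂ) = p + 1 := by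
    simp [Module.finrank_pi]
  rw [hfr] at hdvd0
  -- now pure arithmetic
  clear hτsq hτanti hτ hManti hMsq hM hψ hfr τ M ψ hsq hanti ρ
  have hle : 2 ^ (p / 2) ≤ p + 1 := Nat.le_of_dvd (by omega) hdvd0
  have hlt : p < 9 := by
    by_contra h
    push_neg at h
    have hk : 4 ≤ p / 2 := by omega
    have := two_mul_add_two_lt_two_pow (p / 2) hk
    omega
  interval_cases p <;> revert hdvd0 <;> decide
end

section
/- There do not exist skew-symmetric linear endomorphisms F₁, …, F₇ of the Euclidean space ℝ^{16} satisfying Fᵢ ∘ Fᵢ = −id for all i and Fᵢ ∘ Fⱼ + Fⱼ ∘ Fᵢ = 0 for all i ≠ j, with the additional property that for every unit vector x ∈ ℝ^{16} and every pair i ≠ j the vector Fⱼ(Fᵢ(x)) lies in the linear span of {F₁(x), …, F₇(x)}. -/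
open RealInnerProductSpace

/-- There is no system of seven skew-symmetric anticommuting complex structures
`F₁, …, F₇` on the Euclidean space `ℝ^{16}` such that for every unit vector `x`
and all `i ≠ j` the vector `Fⱼ(Fᵢ(x))` lies in the span of `{F₁(x), …, F₇(x)}`.
This rules out generalized Killing spinors with two eigenvalues on `S^{15}`. -/
theorem no_seven_structures_S15 :
    ¬ ∃ F : Fin 7 → (EuclideanSpace ℝ (Fin 16) →ₗ[ℝ] EuclideanSpace ℝ (Fin 16)),
      (∀ i, ∀ x y : EuclideanSpace ℝ (Fin 16), ⟪F i x, y⟫ = -⟪x, F i y⟫) ∧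
      (∀ i, F i ∘ₗ F i = -LinearMap.id) ∧
      (∀ i j, i ≠ j → F i ∘ₗ F j + F j ∘ₗ F i = 0) ∧
      (∀ x : EuclideanSpace ℝ (Fin 16), ‖x‖ = 1 → ∀ i j, i ≠ j →
        F j (F i x) ∈ Submodule.span ℝ (Set.range fun l => F l x)) := by
  classical
  rintro ⟨F, hskew, hsqm, hantim, hspan⟩
  set V := EuclideanSpace ℝ (Fin 16) with hV
  -- pointwise versions of the algebraic hypotheses
  have hsq : ∀ i (x : V), F i (F i x) = -x := by
    intro i x
    have := congrArg (fun f => f x) (hsqm i)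
    simpa using this
  have hanti : ∀ i j, i ≠ j → ∀ x : V, F i (F j x) = -(F j (F i x)) := by
    intro i j hij x
    have := congrArg (fun f => f x) (hantim i j hij)
    simp only [LinearMap.add_apply, LinearMap.comp_apply, LinearMap.zero_apply] at this
    exact eq_neg_of_add_eq_zero_left this
  -- basic inner product facts
  have hFinner : ∀ (i : Fin 7) (x y : V), ⟪F i x, F i y⟫ = ⟪x, y⟫ := by
    intro i x y
    rw [hskew i x (F i y), hsq i y, inner_neg_right, neg_neg]
  have hskew_self : ∀ (i : Fin 7) (x : V), ⟪F i x, x⟫ = 0 := by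
    intro i x
    have h1 := hskew i x x
    have h2 : ⟪x, F i x⟫ = ⟪F i x, x⟫ := real_inner_comm _ _
    linarith
  -- the symmetric involutions S k = F k ∘ F 1 ∘ F 0
  set S : Fin 7 → (V →ₗ[ℝ] V) := fun k => F k ∘ₗ F 1 ∘ₗ F 0 with hSdef
  have hSapp : ∀ (k : Fin 7) (x : V), S k x = F k (F 1 (F 0 x)) := fun k x => rfl
  have hSS : ∀ k l : Fin 7, k ≠ 0 → k ≠ 1 → l ≠ 0 → l ≠ 1 → ∀ x : V,
      S k (S l x) = -(F k (F l x)) := by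
    intro k l hk0 hk1 hl0 hl1 x
    have e1 : F 0 (F 1 (F 0 x)) = F 1 x := by
      rw [hanti 0 1 (by decide) (F 0 x), hsq 0 x]
      simp
    have e2 : F 0 (F l (F 1 (F 0 x))) = -(F l (F 1 x)) := by
      rw [hanti 0 l (Ne.symm hl0) (F 1 (F 0 x)), e1]
    have e3 : F 1 (F 0 (F l (F 1 (F 0 x)))) = -(F l x) := by
      rw [e2, map_neg, hanti 1 l (Ne.symm hl1) (F 1 x), hsq 1 x]
      simp
    simp only [hSapp]
    rw [e3, map_neg]
  have hSsymm : ∀ k : Fin 7, k ≠ 0 → k ≠ 1 → ∀ x y : V, ⟪S k x, y⟫ = ⟪x, S k y⟫ := by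
    intro k hk0 hk1 x y
    have e : F 0 (F 1 (F k y)) = -(F k (F 1 (F 0 y))) := by
      rw [hanti 1 k (Ne.symm hk1) y, map_neg, hanti 0 k (Ne.symm hk0) (F 1 y),
        hanti 0 1 (by decide) y]
      simp
    simp only [hSapp]
    rw [hskew k, hskew 1, hskew 0, e, inner_neg_right]
    ring
  have hSanti : ∀ k l : Fin 7, k ≠ 0 → k ≠ 1 → l ≠ 0 → l ≠ 1 → k ≠ l → ∀ x : V,
      S k (S l x) = -(S l (S k x)) := by
    intro k l hk0 hk1 hl0 hl1 hkl x
    rw [hSS k l hk0 hk1 hl0 hl1 x, hSS l k hl0 hl1 hk0 hk1 x,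
      hanti k l hkl x]
  have hSsq : ∀ k : Fin 7, k ≠ 0 → k ≠ 1 → ∀ x : V, S k (S k x) = x := by
    intro k hk0 hk1 x
    rw [hSS k k hk0 hk1 hk0 hk1 x, hsq k x]
    simp
  -- eigenspaces of T = S 2
  set T := S 2 with hT
  have hTsq : ∀ x : V, T (T x) = x := hSsq 2 (by decide) (by decide)
  have hTsymm : ∀ x y : V, ⟪T x, y⟫ = ⟪x, T y⟫ := hSsymm 2 (by decide) (by decide)
  set Ep := LinearMap.ker (T - LinearMap.id) with hEpdef
  set Em := LinearMap.ker (T + LinearMap.id) with hEmdef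
  have hmemp : ∀ x : V, x ∈ Ep ↔ T x = x := by
    intro x
    simp [hEpdef, LinearMap.mem_ker, sub_eq_zero]
  have hmemm : ∀ x : V, x ∈ Em ↔ T x = -x := by
    intro x
    simp [hEmdef, LinearMap.mem_ker, add_eq_zero_iff_eq_neg]
  have hsup : Ep ⊔ Em = ⊤ := by
    rw [eq_top_iff]
    intro x _
    have hx : x = (2:ℝ)⁻¹ • (x + T x) + (2:ℝ)⁻¹ • (x - T x) := by
      rw [smul_add, smul_sub]
      module
    rw [hx]
    refine Submodule.add_mem_sup (Ep.smul_mem _ ((hmemp _).2 ?_)) (Em.smul_mem _ ((hmemm _).2 ?_))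
    · rw [map_add, hTsq x]; abel
    · rw [map_sub, hTsq x]; abel
  have hinf : Ep ⊓ Em = ⊥ := by
    rw [eq_bot_iff]
    rintro x ⟨h1, h2⟩
    have hx1 := (hmemp x).1 h1
    have hx2 := (hmemm x).1 h2
    have h3 : (2:ℝ) • x = 0 := by
      rw [two_smul]
      nth_rewrite 1 [← hx1]
      rw [hx2]
      abel
    rcases smul_eq_zero.1 h3 with h | h
    · norm_num at h
    · simpa using h
  have hfr16 : Module.finrank ℝ V = 16 := finrank_euclideanSpace_fin
  have hfrsum : Module.finrank ℝ Ep + Module.finrank ℝ Em = 16 := by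
    have h := Submodule.finrank_sup_add_finrank_inf_eq Ep Em
    rw [hsup, hinf, finrank_top, finrank_bot, hfr16] at h
    omega
  -- S 3 exchanges Ep and Em, so they have equal dimension 8
  have hS3inj : Function.Injective (S 3) := by
    intro a b hab
    have := congrArg (S 3) hab
    rwa [hSsq 3 (by decide) (by decide), hSsq 3 (by decide) (by decide)] at this
  have hmap1 : ∀ x : V, x ∈ Ep → S 3 x ∈ Em := by
    intro x hx
    rw [hmemm]
    have := hSanti 2 3 (by decide) (by decide) (by decide) (by decide) (by decide) x
    rw [(hmemp x).1 hx] at this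
    exact this
  have hmap2 : ∀ x : V, x ∈ Em → S 3 x ∈ Ep := by
    intro x hx
    rw [hmemp]
    have := hSanti 2 3 (by decide) (by decide) (by decide) (by decide) (by decide) x
    rw [(hmemm x).1 hx, map_neg] at this
    rw [this, neg_neg]
  have hfrle1 : Module.finrank ℝ Ep ≤ Module.finrank ℝ Em :=
    LinearMap.finrank_le_finrank_of_injective
      (f := (S 3).restrict hmap1)
      (fun a b hab => by
        apply Subtype.ext
        exact hS3inj (congrArg Subtype.val hab))
  have hfrle2 : Module.finrank ℝ Em ≤ Module.finrank ℝ Ep :=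
    LinearMap.finrank_le_finrank_of_injective
      (f := (S 3).restrict hmap2)
      (fun a b hab => by
        apply Subtype.ext
        exact hS3inj (congrArg Subtype.val hab))
  have hfrEm : Module.finrank ℝ Em = 8 := by omega
  -- construct the unit vector u in Ep
  obtain ⟨z, hz⟩ := exists_ne (0 : V)
  have hy : ∃ y : V, y + T y ≠ 0 := by
    by_contra h
    push_neg at h
    have hT' : ∀ y : V, T y = -y := fun y => eq_neg_of_add_eq_zero_right (h y)
    have h3 := hSanti 2 3 (by decide) (by decide) (by decide) (by decide) (by decide) z
    rw [← hT] at h3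
    rw [hT' z, map_neg, hT' (S 3 z)] at h3
    have h4 : S 3 z = 0 := by
      have : (2:ℝ) • S 3 z = 0 := by
        rw [two_smul]
        nth_rewrite 1 [← neg_neg (S 3 z), h3]
        abel
      rcases smul_eq_zero.1 this with h | h
      · norm_num at h
      · exact h
    have h5 : z = 0 := by
      have := hSsq 3 (by decide) (by decide) z
      rw [h4, map_zero] at this
      exact this.symm
    exact hz h5
  obtain ⟨y, hy⟩ := hy
  set u₁ := y + T y with hu₁
  have hu₁p : u₁ ∈ Ep := by
    rw [hmemp, hu₁, map_add, hTsq y]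
    abel
  set u := ‖u₁‖⁻¹ • u₁ with hu_def
  have hu_norm : ‖u‖ = 1 := by
    rw [hu_def, norm_smul, norm_inv, norm_norm,
      inv_mul_cancel₀ (norm_ne_zero_iff.2 hy)]
  have hup : u ∈ Ep := Ep.smul_mem _ hu₁p
  have hTu : T u = u := (hmemp u).1 hup
  -- the subspace W spanned by S 3 u, ..., S 6 u
  set g : Fin 4 → V := ![S 3 u, S 4 u, S 5 u, S 6 u] with hg
  set W := Submodule.span ℝ (Set.range g) with hW
  have hfrW : Module.finrank ℝ W ≤ 4 := by
    refine (finrank_span_le_card (Set.range g)).trans ?_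
    rw [Set.toFinset_card]
    exact (Fintype.card_range_le g).trans (by simp)
  have hfrWperp : 12 ≤ Module.finrank ℝ Wᗮ := by
    have := Submodule.finrank_add_finrank_orthogonal (K := W)
    rw [hfr16] at this
    omega
  -- find nonzero v₀ in Em ⊓ Wᗮ
  have hfrinf : 0 < Module.finrank ℝ (Em ⊓ Wᗮ : Submodule ℝ V) := by
    have h1 := Submodule.finrank_sup_add_finrank_inf_eq Em Wᗮ
    have h2 : Module.finrank ℝ (Em ⊔ Wᗮ : Submodule ℝ V) ≤ 16 :=
      (Submodule.finrank_le _).trans hfr16.le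
    omega
  have : Nontrivial (Em ⊓ Wᗮ : Submodule ℝ V) := Module.finrank_pos_iff.1 hfrinf
  obtain ⟨v₀, hv₀⟩ := exists_ne (0 : (Em ⊓ Wᗮ : Submodule ℝ V))
  have hv₀ne : (v₀ : V) ≠ 0 := fun h => hv₀ (Subtype.ext h)
  set v := ‖(v₀ : V)‖⁻¹ • (v₀ : V) with hv_def
  have hv_norm : ‖v‖ = 1 := by
    rw [hv_def, norm_smul, norm_inv, norm_norm,
      inv_mul_cancel₀ (norm_ne_zero_iff.2 hv₀ne)]
  have hvm : v ∈ Em := Em.smul_mem _ v₀.2.1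
  have hvperp : v ∈ Wᗮ := Wᗮ.smul_mem _ v₀.2.2
  have hTv : T v = -v := (hmemm v).1 hvm
  have hvW : ∀ w ∈ W, ⟪w, v⟫ = 0 := fun w hw => (Submodule.mem_orthogonal W v).1 hvperp w hw
  have hSluv : ∀ l : Fin 7, l = 3 ∨ l = 4 ∨ l = 5 ∨ l = 6 → ⟪S l u, v⟫ = 0 := by
    intro l hl
    apply hvW
    apply Submodule.subset_span
    rcases hl with h | h | h | h
    · exact ⟨0, by simp [hg, h]⟩
    · exact ⟨1, by simp [hg, h]⟩
    · exact ⟨2, by simp [hg, h]⟩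
    · exact ⟨3, by simp [hg, h]⟩
  have huv : ⟪u, v⟫ = 0 := by
    have h1 : ⟪u, v⟫ = ⟪T u, v⟫ := by rw [hTu]
    have h2 : ⟪T u, v⟫ = ⟪u, T v⟫ := hTsymm u v
    rw [hTv, inner_neg_right] at h2
    linarith
  -- the unit vector x
  set x := (Real.sqrt 2)⁻¹ • (u + v) with hx_def
  have hsqrt2 : (0:ℝ) < Real.sqrt 2 := Real.sqrt_pos.2 (by norm_num)
  have hnormuv : ‖u + v‖ = Real.sqrt 2 := by
    have h1 : ‖u + v‖ ^ 2 = 2 := by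
      rw [norm_add_sq_real, hu_norm, hv_norm, huv]
      norm_num
    rw [← Real.sqrt_sq (norm_nonneg (u + v)), h1]
  have hx_norm : ‖x‖ = 1 := by
    rw [hx_def, norm_smul, norm_inv, Real.norm_eq_abs, abs_of_pos hsqrt2, hnormuv]
    field_simp
  -- key: ⟪S l x, x⟫ = 0 for l = 2, ..., 6
  have hq2 : ⟪S 2 x, x⟫ = 0 := by
    have hexp : ⟪T (u + v), u + v⟫ = 0 := by
      rw [map_add, hTu, hTv, inner_add_right, inner_add_left, inner_add_left,
        inner_neg_left, inner_neg_left]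
      have e1 : ⟪u, u⟫ = 1 := by
        rw [real_inner_self_eq_norm_sq, hu_norm]; norm_num
      have e2 : ⟪v, v⟫ = 1 := by
        rw [real_inner_self_eq_norm_sq, hv_norm]; norm_num
      have e3 : ⟪v, u⟫ = ⟪u, v⟫ := real_inner_comm _ _
      rw [e1, e2, e3, huv]
      ring
    rw [← hT, hx_def, map_smul, real_inner_smul_left, real_inner_smul_right, hexp]
    ring
  have hqgen : ∀ l : Fin 7, l ≠ 0 → l ≠ 1 → l ≠ 2 → ⟪S l u, v⟫ = 0 → ⟪S l x, x⟫ = 0 := by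
    intro l h0 h1 h2 hWuv
    have hA : ⟪S l u, u⟫ = 0 := by
      have e1 : S l (T u) = -(T (S l u)) :=
        hSanti l 2 h0 h1 (by decide) (by decide) h2 u
      have e2 : ⟪S l u, u⟫ = -⟪T (S l u), u⟫ := by
        nth_rewrite 1 [← hTu]
        rw [e1, inner_neg_left]
      rw [hTsymm, hTu] at e2
      linarith
    have hD : ⟪S l v, v⟫ = 0 := by
      have e1 : S l (T v) = -(T (S l v)) :=
        hSanti l 2 h0 h1 (by decide) (by decide) h2 v
      rw [hTv, map_neg] at e1
      have e2 : T (S l v) = S l v := (neg_injective e1).symm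
      have e3 : ⟪S l v, v⟫ = -⟪S l v, v⟫ := by
        nth_rewrite 1 [← e2]
        rw [hTsymm, hTv, inner_neg_right]
      linarith
    have hC : ⟪S l v, u⟫ = 0 := by
      rw [hSsymm l h0 h1 v u, real_inner_comm, hWuv]
    have hexp : ⟪S l (u + v), u + v⟫ = 0 := by
      rw [map_add, inner_add_right, inner_add_left, inner_add_left, hA, hD, hC, hWuv]
      ring
    rw [hx_def, map_smul, real_inner_smul_left, real_inner_smul_right, hexp]
    ring
  -- F 1 (F 0 x) is orthogonal to every F l x
  have hGperp : ∀ l : Fin 7, ⟪F 1 (F 0 x), F l x⟫ = 0 := by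
    have key : ∀ l : Fin 7, l ≠ 0 → l ≠ 1 → ⟪F 1 (F 0 x), F l x⟫ = -⟪S l x, x⟫ := by
      intro l h0 h1
      rw [real_inner_comm, hskew l x (F 1 (F 0 x)), ← hSapp, real_inner_comm]
    have hcase : ∀ m : Fin 7, m = 0 ∨ m = 1 ∨ m = 2 ∨ m = 3 ∨ m = 4 ∨ m = 5 ∨ m = 6 := by
      decide
    intro l
    rcases hcase l with rfl | rfl | rfl | rfl | rfl | rfl | rfl
    · exact hskew_self 1 (F 0 x)
    · rw [hFinner 1 (F 0 x) x]
      exact hskew_self 0 x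
    · rw [key 2 (by decide) (by decide), hq2]; ring
    · rw [key 3 (by decide) (by decide),
        hqgen 3 (by decide) (by decide) (by decide) (hSluv 3 (by norm_num))]; ring
    · rw [key 4 (by decide) (by decide),
        hqgen 4 (by decide) (by decide) (by decide) (hSluv 4 (by norm_num))]; ring
    · rw [key 5 (by decide) (by decide),
        hqgen 5 (by decide) (by decide) (by decide) (hSluv 5 (by norm_num))]; ring
    · rw [key 6 (by decide) (by decide),
        hqgen 6 (by decide) (by decide) (by decide) (hSluv 6 (by norm_num))]; ring
  -- the contradiction
  have hmem := hspan x hx_norm 0 1 (by decide)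
  obtain ⟨c, hc⟩ := (Submodule.mem_span_range_iff_exists_fun ℝ).1 hmem
  have hzero : ⟪F 1 (F 0 x), F 1 (F 0 x)⟫ = 0 := by
    nth_rewrite 2 [← hc]
    rw [inner_sum]
    refine Finset.sum_eq_zero fun i _ => ?_
    rw [real_inner_smul_right, hGperp i]
    ring
  have hone : ⟪F 1 (F 0 x), F 1 (F 0 x)⟫ = 1 := by
    rw [hFinner 1, hFinner 0, real_inner_self_eq_norm_sq, hx_norm]
    norm_num
  rw [hzero] at hone
  norm_num at hone
end

section
/- Let F₁, …, F₇ be skew-symmetric linear endomorphisms of the Euclidean space ℝ⁸ satisfying Fᵢ ∘ Fᵢ = −id for all i and Fᵢ ∘ Fⱼ + Fⱼ ∘ Fᵢ = 0 for all i ≠ j. Then for every pair i ≠ j, the composition Fᵢ ∘ Fⱼ does not belong to the linear span of {F₁, …, F₇} in the space of endomorphisms of ℝ⁸. -/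
open RealInnerProductSpace

/-!
Write `G = Fᵢ Fⱼ`, so `G² = -1`. If `G = ∑ cₘ Fₘ`, then for every `k ∉ {i, j}` the element
`Fₖ` commutes with `G`, while the anticommutation relations give `Fₖ G + G Fₖ = -2 cₖ`; hence
`G = cₖ Fₖ`. Since there are two such indices `k ≠ l`, this yields
`2 G² = cₖ cₗ (Fₖ Fₗ + Fₗ Fₖ) = 0`, contradicting `G² = -1`.
-/

namespace AnticommutingSystem

variable {R A ι : Type*} [Field R] [Ring A] [Algebra R A] [Fintype ι] {F : ι → A}
  (hsq : ∀ i, F i * F i = -1) (hanti : ∀ i j, i ≠ j → F i * F j + F j * F i = 0)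
include hsq hanti

theorem mul_sum_add_sum_mul (c : ι → R) (k : ι) :
    F k * (∑ m, c m • F m) + (∑ m, c m • F m) * F k = (-(2 * c k)) • (1 : A) := by
  classical
  rw [Finset.mul_sum, Finset.sum_mul, ← Finset.sum_add_distrib,
    Finset.sum_eq_single_of_mem k (Finset.mem_univ k)]
  · rw [mul_smul_comm, smul_mul_assoc, ← smul_add, hsq k]
    module
  · intro m _ hmk
    rw [mul_smul_comm, smul_mul_assoc, ← smul_add, hanti k m (Ne.symm hmk), smul_zero]

theorem eq_smul_of_commute_of_eq_sum [NeZero (2 : R)] {x : A} {c : ι → R}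
    (hx : x = ∑ m, c m • F m) {k : ι} (hcomm : Commute (F k) x) : x = c k • F k := by
  have hmul : F k * x = (-c k) • (1 : A) := by
    apply smul_right_injective A (two_ne_zero (α := R))
    have h := mul_sum_add_sum_mul hsq hanti c k
    rw [← hx, ← hcomm.eq] at h
    simp only [two_smul, h]
    module
  calc x = -(F k * (F k * x)) := by rw [← mul_assoc, hsq k]; noncomm_ring
    _ = c k • F k := by rw [hmul, mul_smul_comm, mul_one]; module

omit [Fintype ι] in
theorem mul_mul_self_eq_neg_one {i j : ι} (hij : i ≠ j) : F i * F j * (F i * F j) = -1 := by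
  have hji : F j * F i = -(F i * F j) := eq_neg_of_add_eq_zero_left (hanti j i hij.symm)
  calc F i * F j * (F i * F j) = F i * (F j * F i) * F j := by noncomm_ring
    _ = -(F i * F i * (F j * F j)) := by rw [hji]; noncomm_ring
    _ = -1 := by rw [hsq i, hsq j]; noncomm_ring

omit hsq [Fintype ι] in
theorem commute_mul {i j k : ι} (hki : k ≠ i) (hkj : k ≠ j) : Commute (F k) (F i * F j) := by
  have hki' : F k * F i = -(F i * F k) := eq_neg_of_add_eq_zero_left (hanti k i hki)
  have hkj' : F k * F j = -(F j * F k) := eq_neg_of_add_eq_zero_left (hanti k j hkj)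
  calc F k * (F i * F j) = -(F i * (F k * F j)) := by rw [← mul_assoc, hki']; noncomm_ring
    _ = F i * F j * F k := by rw [hkj']; noncomm_ring

theorem mul_notMem_span [NeZero (2 : R)] [Nontrivial A] {i j k l : ι} (hij : i ≠ j)
    (hkl : k ≠ l) (hki : k ≠ i) (hkj : k ≠ j) (hli : l ≠ i) (hlj : l ≠ j) :
    F i * F j ∉ Submodule.span R (Set.range F) := by
  intro hmem
  obtain ⟨c, hc⟩ := (Submodule.mem_span_range_iff_exists_fun R).mp hmem
  set G := F i * F j
  have hk : G = c k • F k :=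
    eq_smul_of_commute_of_eq_sum hsq hanti hc.symm (commute_mul hanti hki hkj)
  have hl : G = c l • F l :=
    eq_smul_of_commute_of_eq_sum hsq hanti hc.symm (commute_mul hanti hli hlj)
  have hGG : (2 : R) • (G * G) = 0 := by
    calc (2 : R) • (G * G) = G * G + G * G := two_smul R _
      _ = c k • F k * (c l • F l) + c l • F l * (c k • F k) :=
        congrArg₂ (· + ·) (congrArg₂ (· * ·) hk hl) (congrArg₂ (· * ·) hl hk)
      _ = (c k * c l) • (F k * F l + F l * F k) := by
        simp only [smul_mul_smul_comm, smul_add, mul_comm (c l)]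
      _ = 0 := by rw [hanti k l hkl, smul_zero]
  rw [mul_mul_self_eq_neg_one hsq hanti hij, smul_neg, neg_eq_zero, smul_eq_zero] at hGG
  exact hGG.elim two_ne_zero one_ne_zero

end AnticommutingSystem

theorem composition_not_in_span_general
    (F : Fin 7 → (EuclideanSpace ℝ (Fin 8) →ₗ[ℝ] EuclideanSpace ℝ (Fin 8)))
    (hsq : ∀ i, F i ∘ₗ F i = -LinearMap.id)
    (hanti : ∀ i j, i ≠ j → F i ∘ₗ F j + F j ∘ₗ F i = 0) :
    ∀ i j, i ≠ j → F i ∘ₗ F j ∉ Submodule.span ℝ (Set.range F) := by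
  intro i j hij
  obtain ⟨k, l, hkl, hki, hkj, hli, hlj⟩ :=
    (by decide : ∀ i j : Fin 7, ∃ k l : Fin 7, k ≠ l ∧ k ≠ i ∧ k ≠ j ∧ l ≠ i ∧ l ≠ j) i j
  exact AnticommutingSystem.mul_notMem_span (A := Module.End ℝ (EuclideanSpace ℝ (Fin 8)))
    hsq hanti hij hkl hki hkj hli hlj

/-- For a system of seven skew-symmetric anticommuting complex structures
`F₁, …, F₇` on the Euclidean space `ℝ⁸`, none of the compositions `Fᵢ ∘ Fⱼ`
(`i ≠ j`) lies in the linear span of `{F₁, …, F₇}` inside `End(ℝ⁸)`. -/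
theorem composition_not_in_span
    (F : Fin 7 → (EuclideanSpace ℝ (Fin 8) →ₗ[ℝ] EuclideanSpace ℝ (Fin 8)))
    (hskew : ∀ i, ∀ x y : EuclideanSpace ℝ (Fin 8), ⟪F i x, y⟫ = -⟪x, F i y⟫)
    (hsq : ∀ i, F i ∘ₗ F i = -LinearMap.id)
    (hanti : ∀ i j, i ≠ j → F i ∘ₗ F j + F j ∘ₗ F i = 0) :
    ∀ i j, i ≠ j → F i ∘ₗ F j ∉ Submodule.span ℝ (Set.range F) :=
  composition_not_in_span_general F hsq hanti
end

section
/- Let E be an n-dimensional real inner product space with orthonormal basis (e₁, …, e_n), and let A be a self-adjoint linear endomorphism of E with tr(A) = 0. Then (1/2) · Σ_{i,j=1}^{n} |A(e_i) ∧ e_j + e_i ∧ A(e_j)|² = (n−2) · tr(A²), where the inner product on wedges of vectors is defined by ⟨u ∧ v, w ∧ z⟩ := ⟨u,w⟩⟨v,z⟩ − ⟨u,z⟩⟨v,w⟩ and |u ∧ v|² := ⟨u ∧ v, u ∧ v⟩. -/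
open RealInnerProductSpace

variable {E : Type*} [NormedAddCommGroup E] [InnerProductSpace ℝ E]

/-- Inner product of two wedges of vectors:
`⟨u ∧ v, w ∧ z⟩ = ⟨u,w⟩⟨v,z⟩ − ⟨u,z⟩⟨v,w⟩`. -/
noncomputable def wedgeInner (u v w z : E) : ℝ := ⟪u, w⟫ * ⟪v, z⟫ - ⟪u, z⟫ * ⟪v, w⟫

/-- The squared norm `|u ∧ v + w ∧ z|²` of a sum of two wedges, computed from
the inner product `wedgeInner` by bilinearity. -/
noncomputable def wedgeSumNormSq (u v w z : E) : ℝ :=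
  wedgeInner u v u v + 2 * wedgeInner u v w z + wedgeInner w z w z

lemma trace_eq_sum_inner' {n : ℕ} [FiniteDimensional ℝ E]
    (e : OrthonormalBasis (Fin n) ℝ E) (A : E →ₗ[ℝ] E) :
    LinearMap.trace ℝ E A = ∑ i, ⟪e i, A (e i)⟫ := by
  rw [LinearMap.trace_eq_matrix_trace ℝ e.toBasis A, Matrix.trace]
  congr 1; ext i
  rw [Matrix.diag_apply, LinearMap.toMatrix_apply, e.coe_toBasis_repr_apply,
    e.repr_apply_apply, e.coe_toBasis]

/-- Pointwise algebraic identity underlying the rigidity of Killing spinors on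
spheres: for a trace-free self-adjoint endomorphism `A` of an `n`-dimensional real
inner product space with orthonormal basis `(e₁, …, e_n)`,
`(1/2) Σ_{i,j} |A(eᵢ) ∧ eⱼ + eᵢ ∧ A(eⱼ)|² = (n−2) tr(A²)`. -/
theorem wedge_sum_identity (n : ℕ) [FiniteDimensional ℝ E]
    (e : OrthonormalBasis (Fin n) ℝ E)
    (A : E →ₗ[ℝ] E) (hA : LinearMap.IsSymmetric A)
    (htr : LinearMap.trace ℝ E A = 0) :
    (1 / 2 : ℝ) * ∑ i : Fin n, ∑ j : Fin n,
        wedgeSumNormSq (A (e i)) (e j) (e i) (A (e j)) =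
      ((n : ℝ) - 2) * LinearMap.trace ℝ E (A ∘ₗ A) := by
  set a : Fin n → Fin n → ℝ := fun i j => ⟪A (e i), e j⟫ with ha
  set t : Fin n → ℝ := fun i => ⟪A (e i), A (e i)⟫ with ht
  have hsym : ∀ i j, a j i = a i j := fun i j => by
    simp only [ha]
    rw [hA (e j) (e i), real_inner_comm]
  have hP : ∀ x y : E, ∑ j, ⟪x, e j⟫ * ⟪e j, y⟫ = ⟪x, y⟫ := fun x y =>
    e.sum_inner_mul_inner x y
  have hnorm : ∀ i, t i = ∑ j, a i j * a i j := by
    intro i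
    show ⟪A (e i), A (e i)⟫ = _
    rw [← hP (A (e i)) (A (e i))]
    refine Finset.sum_congr rfl fun j _ => ?_
    simp only [ha]
    rw [real_inner_comm (A (e i)) (e j)]
  have horth : ∀ i j : Fin n, ⟪e i, e j⟫ = if i = j then (1 : ℝ) else 0 :=
    orthonormal_iff_ite.mp e.orthonormal
  have hT : LinearMap.trace ℝ E (A ∘ₗ A) = ∑ i, t i := by
    rw [trace_eq_sum_inner' e]
    refine Finset.sum_congr rfl fun i _ => ?_
    rw [LinearMap.comp_apply, ← real_inner_comm, hA (A (e i)) (e i), real_inner_comm]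
  have hb : ∑ i, a i i = 0 := by
    rw [← htr, trace_eq_sum_inner' e]
    exact Finset.sum_congr rfl fun i _ => by rw [ha, real_inner_comm]
  have expand : ∀ i j, wedgeSumNormSq (A (e i)) (e j) (e i) (A (e j)) =
      t i + t j - 2 * (a i j * a i j) + 2 * (a i i * a j j)
        - 2 * (if j = i then ⟪A (e i), A (e j)⟫ else 0) := by
    intro i j
    have h1 : ⟪e j, A (e i)⟫ = a i j := real_inner_comm _ _
    have h2 : ⟪e i, A (e j)⟫ = a i j := by rw [real_inner_comm]; exact hsym i j
    have h3 : ⟪A (e j), e i⟫ = a i j := hsym i j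
    have h4 : ⟪e j, A (e j)⟫ = a j j := real_inner_comm _ _
    simp only [wedgeSumNormSq, wedgeInner, h1, h2, h3, h4, horth, mul_ite, ite_mul,
      mul_one, one_mul, mul_zero, zero_mul]
    rcases eq_or_ne j i with h | h
    · subst h; simp [ht]; ring
    · simp [h, Ne.symm h, ht]; ring
  have hsum : ∑ i : Fin n, ∑ j : Fin n,
      wedgeSumNormSq (A (e i)) (e j) (e i) (A (e j)) =
      2 * ((n : ℝ) - 2) * ∑ i, t i := by
    have hdiag : ∀ i : Fin n,
        ∑ j, (if j = i then ⟪A (e i), A (e j)⟫ else 0) = t i := fun i => by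
      rw [Finset.sum_ite_eq' Finset.univ i fun j => ⟪A (e i), A (e j)⟫]
      simp [ht]
    simp only [expand]
    have : ∀ i : Fin n, ∑ j : Fin n,
        (t i + t j - 2 * (a i j * a i j) + 2 * (a i i * a j j)
          - 2 * (if j = i then ⟪A (e i), A (e j)⟫ else 0))
        = (n : ℝ) * t i + (∑ j, t j) - 2 * t i + 2 * (a i i * ∑ j, a j j)
          - 2 * t i := by
      intro i
      rw [Finset.sum_sub_distrib, Finset.sum_add_distrib, Finset.sum_sub_distrib,
        Finset.sum_add_distrib]
      simp only [← Finset.mul_sum]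
      rw [← hnorm i, hdiag i, Finset.sum_const, Finset.card_univ, Fintype.card_fin,
        nsmul_eq_mul]
      try ring
    rw [Finset.sum_congr rfl fun i _ => this i]
    rw [Finset.sum_sub_distrib, Finset.sum_add_distrib, Finset.sum_sub_distrib,
      Finset.sum_add_distrib, hb]
    simp only [mul_zero, Finset.sum_const, Finset.card_univ, Fintype.card_fin,
      nsmul_eq_mul, ← Finset.mul_sum, Finset.sum_const_zero]
    try ring
  rw [hsum, hT]
  ring
end
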